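/- Consider the innovations-form system with matrices (A, B_u, K, C, D), extended input ū = col(u, e), input matrix B̄ = [B_u, K] and feedthrough D̄ = [D, I_{n_y}]. Let {(ū^d(k), y^d(k))}_{k=1}^{K} be a length-K trajectory, let T = T_p + T_f with T_p ≥ n_x, and assume (A, [B_u, K]) is controllable, (A, C) is observable, and ū^d is persistently exciting of order T + n_x. Partition H_T(ū^d_{1:K}) into its first T_p block rows H_ūp and last T_f block rows H_ūf, and H_T(y^d_{1:K}) into H_yp and H_yf. Suppose (ū_p, y_p) is a length-T_p trajectory of the innovations-form system and ū_f ∈ ℝ^{(n_u+n_y) T_f} is a future extended input. Then there exists a unique y_f ∈ ℝ^{n_y T_f} such that (col(ū_p, ū_f), col(y_p, y_f)) is a length-T trajectory, and a vector y_f equals this unique continuation if and only if there exists g ∈ ℝ^{M} with ū_p = H_ūp g, ū_f = H_ūf g, y_p = H_yp g, and y_f = H_yf g. -/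

import Mathlib

open Matrix

/-- `(u, y)` restricted to the (0-based) indices `0, …, T-1` is a length-`T`
input–output trajectory of the LTI system `(A, B, C, D)`. -/
def IsTraj {nx : ℕ} {ι κ : Type*} [Fintype ι]
    (A : Matrix (Fin nx) (Fin nx) ℝ) (B : Matrix (Fin nx) ι ℝ)
    (C : Matrix κ (Fin nx) ℝ) (D : Matrix κ ι ℝ)
    (T : ℕ) (u : ℕ → ι → ℝ) (y : ℕ → κ → ℝ) : Prop :=
  ∃ x : ℕ → Fin nx → ℝ, ∀ k < T,
    x (k + 1) = A.mulVec (x k) + B.mulVec (u k) ∧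
    y k = C.mulVec (x k) + D.mulVec (u k)

/-- Hankel matrix of depth `T` built from the first `K` samples of `ζ`. -/
def Hankel {ι : Type*} (T K : ℕ) (ζ : ℕ → ι → ℝ) :
    Matrix (Fin T × ι) (Fin (K - T + 1)) ℝ :=
  fun p j => ζ ((p.1 : ℕ) + (j : ℕ)) p.2

/-- The first `Tp` block rows of the depth-`(Tp + Tf)` Hankel matrix with `M` columns. -/
def HankelPast {ι : Type*} (Tp M : ℕ) (ζ : ℕ → ι → ℝ) :
    Matrix (Fin Tp × ι) (Fin M) ℝ :=
  fun p j => ζ ((p.1 : ℕ) + (j : ℕ)) p.2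

/-- The last `Tf` block rows of the depth-`(Tp + Tf)` Hankel matrix with `M` columns. -/
def HankelFut {ι : Type*} (Tp Tf M : ℕ) (ζ : ℕ → ι → ℝ) :
    Matrix (Fin Tf × ι) (Fin M) ℝ :=
  fun p j => ζ (Tp + (p.1 : ℕ) + (j : ℕ)) p.2

/-- Stacked (column) vector `col(z(0), …, z(T-1))`. -/
def stack {ι : Type*} (T : ℕ) (z : ℕ → ι → ℝ) : Fin T × ι → ℝ :=
  fun p => z (p.1 : ℕ) p.2

/-- Concatenation of a past sequence (its first `Tp` samples) with a future
finite sequence of length `Tf`. -/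
def glue {ι : Type*} (Tp Tf : ℕ) (past : ℕ → ι → ℝ) (fut : Fin Tf → ι → ℝ) :
    ℕ → ι → ℝ :=
  fun k => if k < Tp then past k else if h : k - Tp < Tf then fut ⟨k - Tp, h⟩ else 0

/-- Controllability matrix `[B, AB, …, A^{nx-1}B]`. -/
def ctrbMat {nx : ℕ} {ι : Type*} [Fintype ι]
    (A : Matrix (Fin nx) (Fin nx) ℝ) (B : Matrix (Fin nx) ι ℝ) :
    Matrix (Fin nx) (Fin nx × ι) ℝ :=
  fun i p => (A ^ (p.1 : ℕ) * B) i p.2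

/-- Observability matrix `col(C, CA, …, CA^{nx-1})`. -/
def obsvMat {nx : ℕ} {κ : Type*}
    (A : Matrix (Fin nx) (Fin nx) ℝ) (C : Matrix κ (Fin nx) ℝ) :
    Matrix (Fin nx × κ) (Fin nx) ℝ :=
  fun p j => (C * A ^ (p.1 : ℕ)) p.2 j

/-!
Any annihilator `(ξ, η)` of the data windows `(x j, u j, …, u (j + T - 1))` yields, by expanding
`x (j + s)` through `s` inputs, an annihilator `(ξ Aˢ, …)` of the windows of length `s + T`.
Combining these shifts with the coefficients of the characteristic polynomial of `A` removes the
state part (Cayley–Hamilton), so persistency of excitation of order `T + nₓ` makes the combination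
vanish; since the characteristic polynomial is monic, back-substitution and controllability give
`(ξ, η) = 0` (Willems' fundamental lemma). Hence the columns of `col(X, H_T(ū))` span everything:
every length-`T` trajectory is the image of some `g`, and conversely every `g` gives a trajectory
by linearity and shift invariance. Observability and `Tp ≥ nₓ` fix the initial state from the past
outputs, which makes the continuation unique.
-/

open Finset

namespace Matrix

variable {m n R : Type*} [Field R]

theorem vecMul_injective_of_rank_eq [Fintype m] [Fintype n] {M : Matrix m n R}
    (h : M.rank = Fintype.card m) : Function.Injective M.vecMul := by
  rw [vecMul_injective_iff, linearIndependent_iff_card_eq_finrank_span, ← h,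
    rank_eq_finrank_span_row]
  rfl

theorem mulVec_injective_of_rank_eq [Fintype n] {M : Matrix m n R} (h : M.rank = Fintype.card n) :
    Function.Injective M.mulVec := by
  rw [mulVec_injective_iff, linearIndependent_iff_card_eq_finrank_span, ← h,
    rank_eq_finrank_span_cols]
  rfl

theorem mulVec_surjective_of_vecMul_injective [Fintype m] [Fintype n] {M : Matrix m n R}
    (h : Function.Injective M.vecMul) : Function.Surjective M.mulVec := by
  have hrange : LinearMap.range M.mulVecLin = ⊤ := by
    apply Submodule.eq_top_of_finrank_eq
    rw [range_mulVecLin, ← rank_eq_finrank_span_cols, (vecMul_injective_iff.1 h).rank_matrix,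
      Module.finrank_fintype_fun_eq_card]
  exact LinearMap.range_eq_top.1 hrange

end Matrix

section Glue

variable {ι : Type*} {Tp Tf : ℕ}

theorem glue_of_lt (past : ℕ → ι → ℝ) (fut : Fin Tf → ι → ℝ) {k : ℕ} (hk : k < Tp) :
    glue Tp Tf past fut k = past k :=
  if_pos hk

theorem glue_add (past : ℕ → ι → ℝ) (fut : Fin Tf → ι → ℝ) (t : Fin Tf) :
    glue Tp Tf past fut (Tp + t) = fut t := by
  simp [glue]

theorem exists_fin_eq_add_of_le_of_lt {k : ℕ} (h₁ : Tp ≤ k) (h₂ : k < Tp + Tf) :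
    ∃ t : Fin Tf, k = Tp + t :=
  ⟨⟨k - Tp, by omega⟩, by simp only; omega⟩

theorem glue_eq_hankel_comb_iff [Fintype ι] {M : ℕ} (past : ℕ → ι → ℝ)
    (fut : Fin Tf → ι → ℝ) (ζ : ℕ → ι → ℝ) (g : Fin M → ℝ) :
    (stack Tp past = HankelPast Tp M ζ *ᵥ g ∧
        (fun q : Fin Tf × ι => fut q.1 q.2) = HankelFut Tp Tf M ζ *ᵥ g) ↔
      ∀ k < Tp + Tf, glue Tp Tf past fut k = ∑ j, g j • ζ (k + j) := by
  have hpast : stack Tp past = HankelPast Tp M ζ *ᵥ g ↔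
      ∀ t : Fin Tp, past t = ∑ j, g j • ζ (t + j) := by
    simp [funext_iff, stack, HankelPast, mulVec, dotProduct, mul_comm, Prod.forall]
  have hfut : (fun q : Fin Tf × ι => fut q.1 q.2) = HankelFut Tp Tf M ζ *ᵥ g ↔
      ∀ t : Fin Tf, fut t = ∑ j, g j • ζ (Tp + t + j) := by
    simp [funext_iff, HankelFut, mulVec, dotProduct, mul_comm, Prod.forall]
  rw [hpast, hfut]
  constructor
  · rintro ⟨hp, hf⟩ k hk
    rcases lt_or_ge k Tp with hkp | hkp
    · rw [glue_of_lt _ _ hkp]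
      exact hp ⟨k, hkp⟩
    · obtain ⟨t, rfl⟩ := exists_fin_eq_add_of_le_of_lt hkp hk
      rw [glue_add]
      exact hf t
  · intro h
    refine ⟨fun t => ?_, fun t => ?_⟩
    · rw [← h t (by omega), glue_of_lt _ _ t.isLt]
    · rw [← h _ (by omega), glue_add]

end Glue

section StateSpace

variable {nx : ℕ} {ι κ : Type*} [Fintype ι]
  (A : Matrix (Fin nx) (Fin nx) ℝ) (B : Matrix (Fin nx) ι ℝ)
  (C : Matrix κ (Fin nx) ℝ) (D : Matrix κ ι ℝ)

-- `IsTraj A B C D T u y` unfolds to `∃ x, IsStateTraj A B C D T u y x`.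
def IsStateTraj (T : ℕ) (u : ℕ → ι → ℝ) (y : ℕ → κ → ℝ) (x : ℕ → Fin nx → ℝ) : Prop :=
  ∀ k < T, x (k + 1) = A *ᵥ x k + B *ᵥ u k ∧ y k = C *ᵥ x k + D *ᵥ u k

variable {A B C D}

theorem state_add_eq {N : ℕ} {u : ℕ → ι → ℝ} {x : ℕ → Fin nx → ℝ}
    (hx : ∀ k < N, x (k + 1) = A *ᵥ x k + B *ᵥ u k) {j s : ℕ} (h : j + s ≤ N) :
    x (j + s) = A ^ s *ᵥ x j + ∑ r ∈ range s, (A ^ (s - 1 - r) * B) *ᵥ u (j + r) := by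
  induction s with
  | zero => simp
  | succ s ih =>
    have hA : ∀ r ∈ range s, A *ᵥ ((A ^ (s - 1 - r) * B) *ᵥ u (j + r))
        = (A ^ (s + 1 - 1 - r) * B) *ᵥ u (j + r) := fun r hr => by
      rw [mulVec_mulVec, ← Matrix.mul_assoc, ← pow_succ']
      congr 3
      have := mem_range.1 hr
      omega
    rw [← add_assoc, hx _ (by omega), ih (by omega), mulVec_add, mulVec_mulVec, ← pow_succ',
      mulVec_sum, sum_congr rfl hA, sum_range_succ, Nat.add_sub_cancel, Nat.sub_self, pow_zero,
      Matrix.one_mul, add_assoc]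

theorem state_eq_of_initial_eq {T : ℕ} {u₁ u₂ : ℕ → ι → ℝ} {x₁ x₂ : ℕ → Fin nx → ℝ}
    (hx₁ : ∀ k < T, x₁ (k + 1) = A *ᵥ x₁ k + B *ᵥ u₁ k)
    (hx₂ : ∀ k < T, x₂ (k + 1) = A *ᵥ x₂ k + B *ᵥ u₂ k)
    (hu : ∀ k < T, u₁ k = u₂ k) (h0 : x₁ 0 = x₂ 0) : ∀ k ≤ T, x₁ k = x₂ k := by
  intro k hk
  induction k with
  | zero => exact h0
  | succ k ih => rw [hx₁ k hk, hx₂ k hk, ih (by omega), hu k hk]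

theorem IsStateTraj.output_eq_of_initial_eq {T : ℕ} {u₁ u₂ : ℕ → ι → ℝ} {y₁ y₂ : ℕ → κ → ℝ}
    {x₁ x₂ : ℕ → Fin nx → ℝ} (h₁ : IsStateTraj A B C D T u₁ y₁ x₁)
    (h₂ : IsStateTraj A B C D T u₂ y₂ x₂) (hu : ∀ k < T, u₁ k = u₂ k) (h0 : x₁ 0 = x₂ 0) :
    ∀ k < T, y₁ k = y₂ k := by
  have hx := state_eq_of_initial_eq (fun k hk => (h₁ k hk).1) (fun k hk => (h₂ k hk).1) hu h0
  intro k hk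
  rw [(h₁ k hk).2, (h₂ k hk).2, hx k hk.le, hu k hk]

theorem obsvMat_mulVec_apply (v : Fin nx → ℝ) (p : Fin nx × κ) :
    (obsvMat A C *ᵥ v) p = (C *ᵥ (A ^ (p.1 : ℕ) *ᵥ v)) p.2 := by
  rw [mulVec_mulVec]
  rfl

theorem IsStateTraj.initial_eq_of_output_eq (hobs : Function.Injective (obsvMat A C).mulVec)
    {T : ℕ} (hT : nx ≤ T) {u : ℕ → ι → ℝ} {y₁ y₂ : ℕ → κ → ℝ} {x₁ x₂ : ℕ → Fin nx → ℝ}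
    (h₁ : IsStateTraj A B C D T u y₁ x₁) (h₂ : IsStateTraj A B C D T u y₂ x₂)
    (hy : ∀ k < nx, y₁ k = y₂ k) : x₁ 0 = x₂ 0 := by
  refine hobs (funext fun p => ?_)
  have hk : (p.1 : ℕ) < T := by omega
  have e₁ := state_add_eq (fun k hk => (h₁ k hk).1) (j := 0) (s := p.1) (by omega)
  have e₂ := state_add_eq (fun k hk => (h₂ k hk).1) (j := 0) (s := p.1) (by omega)
  have hy' : C *ᵥ x₁ p.1 = C *ᵥ x₂ p.1 := by
    have := hy p.1 p.1.isLt
    rw [(h₁ p.1 hk).2, (h₂ p.1 hk).2] at this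
    exact add_right_cancel this
  rw [zero_add] at e₁ e₂
  rw [obsvMat_mulVec_apply, obsvMat_mulVec_apply]
  rw [e₁, e₂, mulVec_add, mulVec_add] at hy'
  exact congrFun (add_right_cancel hy') p.2

theorem IsStateTraj.hankel_comb {K T : ℕ} (hTK : T ≤ K) {u : ℕ → ι → ℝ} {y : ℕ → κ → ℝ}
    {x : ℕ → Fin nx → ℝ} (h : IsStateTraj A B C D K u y x) (g : Fin (K - T + 1) → ℝ) :
    IsStateTraj A B C D T (fun k => ∑ j, g j • u (k + j)) (fun k => ∑ j, g j • y (k + j))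
      (fun k => ∑ j, g j • x (k + j)) := by
  intro k hk
  have hkj : ∀ j : Fin (K - T + 1), k + j < K := fun j => by omega
  simp only [mulVec_sum, mulVec_smul, ← sum_add_distrib, ← smul_add]
  constructor <;> refine sum_congr rfl fun j _ => ?_
  · rw [add_right_comm, (h _ (hkj j)).1]
  · rw [(h _ (hkj j)).2]

variable (A B) in
def simulate (x₀ : Fin nx → ℝ) (u : ℕ → ι → ℝ) : ℕ → Fin nx → ℝ
  | 0 => x₀
  | k + 1 => A *ᵥ simulate x₀ u k + B *ᵥ u k

theorem exists_isTraj_glue {Tp Tf : ℕ} {up : ℕ → ι → ℝ} {yp : ℕ → κ → ℝ}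
    (hpast : IsTraj A B C D Tp up yp) (uf : Fin Tf → ι → ℝ) :
    ∃ yf : Fin Tf → κ → ℝ, IsTraj A B C D (Tp + Tf) (glue Tp Tf up uf) (glue Tp Tf yp yf) := by
  obtain ⟨xp, hxp⟩ := hpast
  let x := simulate A B (xp 0) (glue Tp Tf up uf)
  have hx : ∀ k ≤ Tp, x k = xp k :=
    state_eq_of_initial_eq (fun k _ => rfl) (fun k hk => (hxp k hk).1)
      (fun k hk => glue_of_lt up uf hk) rfl
  refine ⟨fun t => C *ᵥ x (Tp + t) + D *ᵥ uf t, x, fun k hk => ⟨rfl, ?_⟩⟩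
  rcases lt_or_ge k Tp with hkp | hkp
  · rw [glue_of_lt _ _ hkp, glue_of_lt _ _ hkp, hx k hkp.le, (hxp k hkp).2]
  · obtain ⟨t, rfl⟩ := exists_fin_eq_add_of_le_of_lt hkp hk
    rw [glue_add, glue_add]

theorem eq_of_isTraj_glue (hobs : Function.Injective (obsvMat A C).mulVec)
    {Tp Tf : ℕ} (hTp : nx ≤ Tp) {up : ℕ → ι → ℝ} {yp : ℕ → κ → ℝ} {uf : Fin Tf → ι → ℝ}
    {yf₁ yf₂ : Fin Tf → κ → ℝ}
    (h₁ : IsTraj A B C D (Tp + Tf) (glue Tp Tf up uf) (glue Tp Tf yp yf₁))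
    (h₂ : IsTraj A B C D (Tp + Tf) (glue Tp Tf up uf) (glue Tp Tf yp yf₂)) : yf₁ = yf₂ := by
  obtain ⟨x₁, hx₁⟩ := h₁
  obtain ⟨x₂, hx₂⟩ := h₂
  have h0 : x₁ 0 = x₂ 0 :=
    IsStateTraj.initial_eq_of_output_eq hobs (by omega) hx₁ hx₂ fun k hk => by
      rw [glue_of_lt _ _ (by omega), glue_of_lt _ _ (by omega)]
  funext t
  rw [← glue_add yp yf₁, ← glue_add yp yf₂]
  exact IsStateTraj.output_eq_of_initial_eq hx₁ hx₂ (fun _ _ => rfl) h0 _ (by omega)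

end StateSpace

section FundamentalLemma

variable {nx : ℕ} {ι : Type*}
  {A : Matrix (Fin nx) (Fin nx) ℝ} {B : Matrix (Fin nx) ι ℝ}

variable (A B) in
/-- Input part of the row `[ξ Aˢ, ξ Aˢ⁻¹ B, …, ξ B, η]` that comes out of the annihilation relation
of `(ξ, η)` when `x (j + s)` is expanded through the inputs `u j, …, u (j + s - 1)`. -/
def shiftedAnnihilator (ξ : Fin nx → ℝ) (η : ℕ → ι → ℝ) (s r : ℕ) : ι → ℝ :=
  if r < s then ξ ᵥ* (A ^ (s - 1 - r) * B) else η (r - s)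

theorem shiftedAnnihilator_window [Fintype ι] {K T : ℕ} {u : ℕ → ι → ℝ} {x : ℕ → Fin nx → ℝ}
    (hx : ∀ k < K, x (k + 1) = A *ᵥ x k + B *ᵥ u k) {ξ : Fin nx → ℝ} {η : ℕ → ι → ℝ}
    (hann : ∀ j ≤ K - T, ξ ⬝ᵥ x j + ∑ r ∈ range T, η r ⬝ᵥ u (j + r) = 0)
    {s j : ℕ} (hj : j + s ≤ K - T) :
    (ξ ᵥ* A ^ s) ⬝ᵥ x j + ∑ r ∈ range (s + T), shiftedAnnihilator A B ξ η s r ⬝ᵥ u (j + r)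
      = 0 := by
  have h := hann (j + s) hj
  rw [state_add_eq hx (by omega)] at h
  have hinput : ∑ r ∈ range s, shiftedAnnihilator A B ξ η s r ⬝ᵥ u (j + r)
      = ξ ⬝ᵥ ∑ r ∈ range s, (A ^ (s - 1 - r) * B) *ᵥ u (j + r) := by
    rw [dotProduct_sum]
    refine sum_congr rfl fun r hr => ?_
    rw [shiftedAnnihilator, if_pos (mem_range.1 hr), dotProduct_mulVec]
  have hpast : ∑ r ∈ range T, shiftedAnnihilator A B ξ η s (s + r) ⬝ᵥ u (j + (s + r))
      = ∑ r ∈ range T, η r ⬝ᵥ u (j + s + r) := by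
    refine sum_congr rfl fun r _ => ?_
    rw [shiftedAnnihilator, if_neg (by omega), Nat.add_sub_cancel_left, add_assoc]
  rw [sum_range_add, hinput, hpast, ← dotProduct_mulVec, ← h, dotProduct_add]
  ring

theorem charpoly_comb_shiftedAnnihilator_window [Fintype ι] {K T : ℕ} {u : ℕ → ι → ℝ}
    {x : ℕ → Fin nx → ℝ} (hx : ∀ k < K, x (k + 1) = A *ᵥ x k + B *ᵥ u k)
    {ξ : Fin nx → ℝ} {η : ℕ → ι → ℝ} (hη : ∀ r, T ≤ r → η r = 0)
    (hann : ∀ j ≤ K - T, ξ ⬝ᵥ x j + ∑ r ∈ range T, η r ⬝ᵥ u (j + r) = 0)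
    {j : ℕ} (hj : j + nx ≤ K - T) :
    ∑ r ∈ range (T + nx),
      (∑ s ∈ range (nx + 1), A.charpoly.coeff s • shiftedAnnihilator A B ξ η s r) ⬝ᵥ u (j + r)
      = 0 := by
  have hshift : ∀ s ∈ range (nx + 1),
      ∑ r ∈ range (T + nx), shiftedAnnihilator A B ξ η s r ⬝ᵥ u (j + r)
        = -((ξ ᵥ* A ^ s) ⬝ᵥ x j) := by
    intro s hs
    rw [mem_range] at hs
    rw [← sum_subset (range_subset_range.2 (show s + T ≤ T + nx by omega))]
    · exact eq_neg_of_add_eq_zero_right (shiftedAnnihilator_window hx hann (by omega))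
    · intro r _ hr
      rw [mem_range, not_lt] at hr
      rw [shiftedAnnihilator, if_neg (by omega), hη _ (by omega), zero_dotProduct]
  have hCH : ∑ s ∈ range (nx + 1), A.charpoly.coeff s • ξ ᵥ* A ^ s = 0 := by
    have := congrArg (ξ ᵥ* ·) (aeval_self_charpoly A)
    simpa [Polynomial.aeval_eq_sum_range, charpoly_natDegree_eq_dim, vecMul_sum, vecMul_smul]
      using this
  calc _ = ∑ s ∈ range (nx + 1), A.charpoly.coeff s *
          ∑ r ∈ range (T + nx), shiftedAnnihilator A B ξ η s r ⬝ᵥ u (j + r) := by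
        simp only [sum_dotProduct, smul_dotProduct, smul_eq_mul, mul_sum]
        exact sum_comm
    _ = -((∑ s ∈ range (nx + 1), A.charpoly.coeff s • ξ ᵥ* A ^ s) ⬝ᵥ x j) := by
        rw [sum_congr rfl fun s hs => by rw [hshift s hs], sum_dotProduct, ← sum_neg_distrib]
        simp [smul_dotProduct]
    _ = 0 := by rw [hCH, zero_dotProduct, neg_zero]

theorem eq_zero_of_hankel_window [Fintype ι] {L K : ℕ} {u : ℕ → ι → ℝ}
    (hPE : (Hankel L K u).rank = Fintype.card ι * L) {d : ℕ → ι → ℝ}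
    (hd : ∀ j ≤ K - L, ∑ r ∈ range L, d r ⬝ᵥ u (j + r) = 0) {r : ℕ} (hr : r < L) :
    d r = 0 := by
  have hinj := vecMul_injective_of_rank_eq (M := Hankel L K u)
    (by rw [hPE, Fintype.card_prod, Fintype.card_fin, mul_comm])
  have h0 : (fun p : Fin L × ι => d p.1 p.2) = 0 := hinj <| by
    show _ ᵥ* _ = 0 ᵥ* _
    rw [zero_vecMul]
    funext j
    have := hd j (by omega)
    simpa [vecMul, dotProduct, Hankel, Fintype.sum_prod_type, Finset.sum_range, add_comm]
      using this
  exact funext fun i => congrFun h0 (⟨r, hr⟩, i)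

theorem shiftedAnnihilator_input_eq_zero {T : ℕ} {α : ℕ → ℝ} (hα : α nx = 1)
    {ξ : Fin nx → ℝ} {η : ℕ → ι → ℝ} (hη : ∀ r, T ≤ r → η r = 0)
    (hd : ∀ r < T + nx, ∑ s ∈ range (nx + 1), α s • shiftedAnnihilator A B ξ η s r = 0)
    (r : ℕ) : η r = 0 := by
  induction hn : T - r using Nat.strong_induction_on generalizing r with
  | _ n ih =>
  rcases le_or_gt T r with hr | hr
  · exact hη r hr
  -- `α` is monic of degree `nx`: entry `nx + r` of the combination is `η r` plus multiples of
  -- `η` at larger indices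
  have h := hd (nx + r) (by omega)
  rw [sum_range_succ, hα, one_smul, shiftedAnnihilator, if_neg (by omega),
    Nat.add_sub_cancel_left, sum_eq_zero, zero_add] at h
  · exact h
  intro s hs
  rw [mem_range] at hs
  rw [shiftedAnnihilator, if_neg (by omega), ih (T - (nx + r - s)) (by omega) _ rfl, smul_zero]

theorem shiftedAnnihilator_state_eq_zero {α : ℕ → ℝ} (hα : α nx = 1) {ξ : Fin nx → ℝ}
    (hd : ∀ r < nx, ∑ s ∈ range (nx + 1), α s • shiftedAnnihilator A B ξ 0 s r = 0)
    {q : ℕ} (hq : q < nx) : ξ ᵥ* (A ^ q * B) = 0 := by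
  induction q using Nat.strong_induction_on with
  | _ q ih =>
  -- entry `nx - 1 - q` of the combination is `ξ Aᵠ B` plus multiples of `ξ Aᵖ B` with `p < q`
  have h := hd (nx - 1 - q) (by omega)
  rw [sum_range_succ, hα, one_smul, shiftedAnnihilator, if_pos (by omega),
    show nx - 1 - (nx - 1 - q) = q by omega, sum_eq_zero, zero_add] at h
  · exact h
  intro s hs
  rw [mem_range] at hs
  unfold shiftedAnnihilator
  split_ifs with hlt
  · rw [ih _ (by omega) (by omega), smul_zero]
  · rw [Pi.zero_apply, smul_zero]

theorem window_annihilator_eq_zero [Fintype ι] {K T : ℕ} (hK : T + nx ≤ K) {u : ℕ → ι → ℝ}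
    {x : ℕ → Fin nx → ℝ} (hx : ∀ k < K, x (k + 1) = A *ᵥ x k + B *ᵥ u k)
    (hctrb : (ctrbMat A B).rank = nx)
    (hPE : (Hankel (T + nx) K u).rank = Fintype.card ι * (T + nx))
    {ξ : Fin nx → ℝ} {η : ℕ → ι → ℝ} (hη : ∀ r, T ≤ r → η r = 0)
    (hann : ∀ j ≤ K - T, ξ ⬝ᵥ x j + ∑ r ∈ range T, η r ⬝ᵥ u (j + r) = 0) :
    ξ = 0 ∧ η = 0 := by
  have hα : A.charpoly.coeff nx = 1 := by
    simpa [charpoly_natDegree_eq_dim] using (charpoly_monic A).coeff_natDegree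
  have hcomb : ∀ r < T + nx,
      ∑ s ∈ range (nx + 1), A.charpoly.coeff s • shiftedAnnihilator A B ξ η s r = 0 :=
    fun r hr => eq_zero_of_hankel_window hPE
      (fun j hj => charpoly_comb_shiftedAnnihilator_window hx hη hann (by omega)) hr
  obtain rfl : η = 0 := funext (shiftedAnnihilator_input_eq_zero hα hη hcomb)
  refine ⟨vecMul_injective_of_rank_eq (by rw [hctrb, Fintype.card_fin]) ?_, rfl⟩
  show _ ᵥ* _ = 0 ᵥ* _
  rw [zero_vecMul]
  funext p
  exact congrFun (shiftedAnnihilator_state_eq_zero hα (fun r hr => hcomb r (by omega)) p.1.isLt)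
    p.2

theorem exists_hankel_comb_eq [Fintype ι] {K T : ℕ} (hK : T + nx ≤ K) {u : ℕ → ι → ℝ}
    {x : ℕ → Fin nx → ℝ} (hx : ∀ k < K, x (k + 1) = A *ᵥ x k + B *ᵥ u k)
    (hctrb : (ctrbMat A B).rank = nx)
    (hPE : (Hankel (T + nx) K u).rank = Fintype.card ι * (T + nx))
    (x₀ : Fin nx → ℝ) (v : ℕ → ι → ℝ) :
    ∃ g : Fin (K - T + 1) → ℝ, ∑ j, g j • x j = x₀ ∧ ∀ k < T, ∑ j, g j • u (k + j) = v k := by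
  let G : Matrix (Fin nx ⊕ Fin T × ι) (Fin (K - T + 1)) ℝ :=
    Matrix.of fun a j => Sum.elim (x j) (fun p => u (p.1 + j) p.2) a
  have hker : ∀ w, w ᵥ* G = 0 → w = 0 := by
    intro w hw
    obtain ⟨hξ, hη⟩ := window_annihilator_eq_zero hK hx hctrb hPE (ξ := w ∘ Sum.inl)
      (η := fun r i => if h : r < T then w (Sum.inr (⟨r, h⟩, i)) else 0)
      (fun r hr => funext fun i => dif_neg (by omega)) fun j hj => by
        simpa [vecMul, dotProduct, G, Fintype.sum_sum_type, Fintype.sum_prod_type,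
          Finset.sum_range, add_comm] using congrFun hw ⟨j, by omega⟩
    funext a
    rcases a with a | ⟨t, i⟩
    · exact congrFun hξ a
    · simpa using congrFun (congrFun hη t) i
  have hinj : Function.Injective G.vecMul := fun w₁ w₂ h =>
    sub_eq_zero.1 (hker _ (by rw [sub_vecMul]; exact sub_eq_zero.2 h))
  obtain ⟨g, hg⟩ := mulVec_surjective_of_vecMul_injective hinj (Sum.elim x₀ fun p => v p.1 p.2)
  refine ⟨g, funext fun a => ?_, fun k hk => funext fun i => ?_⟩
  · simpa [mulVec, dotProduct, G, Finset.sum_apply, mul_comm] using congrFun hg (Sum.inl a)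
  · simpa [mulVec, dotProduct, G, Finset.sum_apply, mul_comm] using
      congrFun hg (Sum.inr (⟨k, hk⟩, i))

end FundamentalLemma

section DataDriven

variable {nx : ℕ} {ι κ : Type*} [Fintype ι]
  {A : Matrix (Fin nx) (Fin nx) ℝ} {B : Matrix (Fin nx) ι ℝ}
  {C : Matrix κ (Fin nx) ℝ} {D : Matrix κ ι ℝ}

theorem isTraj_iff_exists_hankel_comb {K T : ℕ} (hK : T + nx ≤ K) {ud : ℕ → ι → ℝ}
    {yd : ℕ → κ → ℝ} (hdata : IsTraj A B C D K ud yd) (hctrb : (ctrbMat A B).rank = nx)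
    (hPE : (Hankel (T + nx) K ud).rank = Fintype.card ι * (T + nx))
    (u : ℕ → ι → ℝ) (y : ℕ → κ → ℝ) :
    IsTraj A B C D T u y ↔ ∃ g : Fin (K - T + 1) → ℝ,
      (∀ k < T, u k = ∑ j, g j • ud (k + j)) ∧ (∀ k < T, y k = ∑ j, g j • yd (k + j)) := by
  obtain ⟨xd, hxd⟩ := hdata
  have hcomb := IsStateTraj.hankel_comb (T := T) (by omega) hxd
  constructor
  · rintro ⟨x, hx⟩
    obtain ⟨g, hg₀, hgu⟩ := exists_hankel_comb_eq hK (fun k hk => (hxd k hk).1) hctrb hPE (x 0) u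
    refine ⟨g, fun k hk => (hgu k hk).symm, ?_⟩
    exact IsStateTraj.output_eq_of_initial_eq hx (hcomb g) (fun k hk => (hgu k hk).symm)
      (by simpa using hg₀.symm)
  · rintro ⟨g, hu, hy⟩
    refine ⟨fun k => ∑ j, g j • xd (k + j), fun k hk => ?_⟩
    rw [hu k hk, hy k hk]
    exact hcomb g k hk

end DataDriven

/-- **Data-driven simulation for the innovations form.** The innovations form
is the LTI system with extended input `ū = col(u, e)` (index type
`Fin n_u ⊕ Fin n_y`), input matrix `B̄ = [B_u, K]` and feedthrough
`D̄ = [D, I]`. Given a length-`K` data trajectory with `(A, [B_u, K])`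
controllable, `(A, C)` observable, extended input persistently exciting of
order `Tp + Tf + n_x`, a past length-`Tp` trajectory `(ū_p, y_p)` with
`Tp ≥ n_x`, and a future extended input `ū_f`: there is a unique future output
`y_f` such that the concatenation is a length-`(Tp+Tf)` trajectory, and `y_f`
equals this unique continuation iff a common `g` reproduces `ū_p, ū_f, y_p,
y_f` from the partitioned Hankel matrices. -/
theorem statement3
    {nx nu ny K Tp Tf : ℕ}
    (A : Matrix (Fin nx) (Fin nx) ℝ) (Bu : Matrix (Fin nx) (Fin nu) ℝ)
    (Kmat : Matrix (Fin nx) (Fin ny) ℝ)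
    (C : Matrix (Fin ny) (Fin nx) ℝ) (D : Matrix (Fin ny) (Fin nu) ℝ)
    (ud : ℕ → (Fin nu ⊕ Fin ny) → ℝ) (yd : ℕ → Fin ny → ℝ)
    (hTpTfK : Tp + Tf ≤ K)
    (hTp : nx ≤ Tp)
    (hdata : IsTraj A (Matrix.fromCols Bu Kmat) C
        (Matrix.fromCols D (1 : Matrix (Fin ny) (Fin ny) ℝ)) K ud yd)
    (hctrb : (ctrbMat A (Matrix.fromCols Bu Kmat)).rank = nx)
    (hobsv : (obsvMat A C).rank = nx)
    (hPE : (Hankel (Tp + Tf + nx) K ud).rank = (nu + ny) * (Tp + Tf + nx))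
    (up : ℕ → (Fin nu ⊕ Fin ny) → ℝ) (yp : ℕ → Fin ny → ℝ)
    (hpast : IsTraj A (Matrix.fromCols Bu Kmat) C
        (Matrix.fromCols D (1 : Matrix (Fin ny) (Fin ny) ℝ)) Tp up yp)
    (uf : Fin Tf → (Fin nu ⊕ Fin ny) → ℝ) :
    (∃! yf : Fin Tf → Fin ny → ℝ,
        IsTraj A (Matrix.fromCols Bu Kmat) C
          (Matrix.fromCols D (1 : Matrix (Fin ny) (Fin ny) ℝ))
          (Tp + Tf) (glue Tp Tf up uf) (glue Tp Tf yp yf)) ∧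
    (∀ yf : Fin Tf → Fin ny → ℝ,
        IsTraj A (Matrix.fromCols Bu Kmat) C
          (Matrix.fromCols D (1 : Matrix (Fin ny) (Fin ny) ℝ))
          (Tp + Tf) (glue Tp Tf up uf) (glue Tp Tf yp yf) ↔
        ∃ g : Fin (K - (Tp + Tf) + 1) → ℝ,
          stack Tp up = (HankelPast Tp (K - (Tp + Tf) + 1) ud).mulVec g ∧
          (fun q : Fin Tf × (Fin nu ⊕ Fin ny) => uf q.1 q.2) =
            (HankelFut Tp Tf (K - (Tp + Tf) + 1) ud).mulVec g ∧
          stack Tp yp = (HankelPast Tp (K - (Tp + Tf) + 1) yd).mulVec g ∧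
          (fun q : Fin Tf × Fin ny => yf q.1 q.2) =
            (HankelFut Tp Tf (K - (Tp + Tf) + 1) yd).mulVec g) := by
  have hobs : Function.Injective (obsvMat A C).mulVec :=
    mulVec_injective_of_rank_eq (by rw [hobsv, Fintype.card_fin])
  -- a Hankel matrix of full row rank is at least as wide as it is high
  have hK : Tp + Tf + nx ≤ K := by
    rcases Nat.eq_zero_or_pos nx with hnx | hnx
    · omega
    have hinputs : 0 < nu + ny := by
      have hwidth := (ctrbMat A (Matrix.fromCols Bu Kmat)).rank_le_card_width
      simp only [hctrb, Fintype.card_prod, Fintype.card_fin, Fintype.card_sum] at hwidth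
      exact Nat.pos_of_ne_zero fun h => by rw [h, mul_zero] at hwidth; omega
    have hwidth := (Hankel (Tp + Tf + nx) K ud).rank_le_card_width
    rw [hPE, Fintype.card_fin] at hwidth
    have := Nat.le_mul_of_pos_left (Tp + Tf + nx) hinputs
    omega
  refine ⟨existsUnique_of_exists_of_unique (exists_isTraj_glue hpast uf)
    fun _ _ => eq_of_isTraj_glue hobs hTp, fun yf => ?_⟩
  rw [isTraj_iff_exists_hankel_comb hK hdata hctrb (by simpa [mul_comm] using hPE)]
  refine exists_congr fun g => ?_
  rw [← and_assoc, glue_eq_hankel_comb_iff, glue_eq_hankel_comb_iff]
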